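/- There exists a nonnegative function f ∈ L¹((0,1)²) and a sequence (Q^(n)) of finite partitions of (0,1)² into axis-parallel rectangles of positive Lebesgue measure, with mesh ‖Q^(n)‖ → 0 (the maximal diameter of a cell tends to 0), such that for every u ∈ (0,1)², limsup_n E(f | Q^(n))(u) = +∞, where E(f|Q)(u) denotes the average of f over the cell of Q containing u. -/

import Mathlib

open MeasureTheory Set

/-- `B` is an axis-parallel rectangle: a product of two intervals. -/
def IsAxisRect (B : Set (ℝ × ℝ)) : Prop :=
  ∃ I J : Set ℝ, I.OrdConnected ∧ J.OrdConnected ∧ B = I ×ˢ J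

/-- `Q` is a finite partition of the open unit square into axis-parallel
rectangles of positive Lebesgue measure. -/
def IsRectPartition (Q : Finset (Set (ℝ × ℝ))) : Prop :=
  (∀ B ∈ Q, IsAxisRect B ∧ MeasurableSet B ∧ 0 < volume B) ∧
    (⋃ B ∈ Q, B) = Ioo (0:ℝ) 1 ×ˢ Ioo (0:ℝ) 1 ∧
    (Q : Set (Set (ℝ × ℝ))).PairwiseDisjoint id

open scoped ENNReal

noncomputable section SaksAux

local instance : DecidableEq (Set (ℝ × ℝ)) := Classical.decEq _

/-- dyadic length `2⁻ⁱ` -/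
def dy (i : ℕ) : ℝ := ((2:ℝ)^i)⁻¹

lemma dy_pos (i : ℕ) : 0 < dy i := by
  unfold dy; positivity

lemma dy_eq (i : ℕ) : dy i = (1/2:ℝ)^i := by
  unfold dy; rw [one_div, inv_pow]

lemma dy_mul (i K : ℕ) (h : i ≤ K) : (2:ℝ)^(K-i) * dy K = dy i := by
  unfold dy
  have h2 : (2:ℝ)^(K-i) * (2:ℝ)^i = (2:ℝ)^K := by
    rw [← pow_add, Nat.sub_add_cancel h]
  have hp : (0:ℝ) < (2:ℝ)^K := by positivity
  have hpi : (0:ℝ) < (2:ℝ)^i := by positivity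
  field_simp
  nlinarith [hp, hpi]

lemma dy_anti {i j : ℕ} (h : i ≤ j) : dy j ≤ dy i := by
  unfold dy
  apply inv_anti₀ (by positivity)
  exact pow_le_pow_right₀ (by norm_num) h

/-- dyadic interval of depth `i`, index `k` -/
def iv (i k : ℕ) : Set ℝ := Ico ((k:ℝ) * dy i) ((k+1 : ℕ) * dy i)

/-- dyadic interval intersected with `(0,1)` -/
def ivS (i k : ℕ) : Set ℝ := iv i k ∩ Ioo 0 1

lemma iv_nested {i K a : ℕ} (h : i ≤ K) : iv K a ⊆ iv i (a / 2^(K-i)) := by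
  intro x hx
  obtain ⟨h1, h2⟩ := hx
  have hm : 0 < 2^(K-i) := Nat.pow_pos (by norm_num)
  constructor
  · calc ((a / 2^(K-i) : ℕ) : ℝ) * dy i
        = ((a / 2^(K-i) : ℕ) : ℝ) * ((2:ℝ)^(K-i) * dy K) := by rw [dy_mul i K h]
      _ = (((a / 2^(K-i)) * 2^(K-i) : ℕ) : ℝ) * dy K := by push_cast; ring
      _ ≤ (a:ℝ) * dy K := by
          have : ((a / 2^(K-i)) * 2^(K-i) : ℕ) ≤ a := Nat.div_mul_le_self a _
          exact mul_le_mul_of_nonneg_right (by exact_mod_cast this) (dy_pos K).le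
      _ ≤ x := h1
  · calc x < ((a+1 : ℕ):ℝ) * dy K := h2
      _ ≤ (((a / 2^(K-i) + 1) * 2^(K-i) : ℕ) : ℝ) * dy K := by
          have hdm := Nat.div_add_mod a (2^(K-i))
          have hmod := Nat.mod_lt a hm
          have : a + 1 ≤ (a / 2^(K-i) + 1) * 2^(K-i) := by
            have h2' : (a / 2^(K-i) + 1) * 2^(K-i) = 2^(K-i) * (a / 2^(K-i)) + 2^(K-i) := by ring
            omega
          exact mul_le_mul_of_nonneg_right (by exact_mod_cast this) (dy_pos K).le
      _ = ((a / 2^(K-i) + 1 : ℕ) : ℝ) * ((2:ℝ)^(K-i) * dy K) := by push_cast; ring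
      _ = ((a / 2^(K-i) + 1 : ℕ) : ℝ) * dy i := by rw [dy_mul i K h]

lemma mem_iv_floor {x : ℝ} (hx : 0 ≤ x) (i : ℕ) : x ∈ iv i ⌊x * 2^i⌋₊ := by
  have hp : (0:ℝ) < (2:ℝ)^i := by positivity
  have h0 : 0 ≤ x * 2^i := by positivity
  constructor
  · have := Nat.floor_le h0
    calc (⌊x * 2^i⌋₊ : ℝ) * dy i ≤ (x * 2^i) * dy i := by
          exact mul_le_mul_of_nonneg_right this (dy_pos i).le
      _ = x := by unfold dy; field_simp
  · have := Nat.lt_floor_add_one (x * 2^i)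
    calc x = (x * 2^i) * dy i := by unfold dy; field_simp
      _ < ((⌊x * 2^i⌋₊ : ℝ) + 1) * dy i := by
          exact mul_lt_mul_of_pos_right this (dy_pos i)
      _ = ((⌊x * 2^i⌋₊ + 1 : ℕ) : ℝ) * dy i := by push_cast; ring

lemma floor_lt_of_lt_one {x : ℝ} (hx1 : x < 1) (i : ℕ) : ⌊x * 2^i⌋₊ < 2^i := by
  have hp : (0:ℝ) < (2:ℝ)^i := by positivity
  rcases le_or_gt x 0 with h | h
  · have : x * 2^i ≤ 0 := mul_nonpos_of_nonpos_of_nonneg h hp.le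
    have : ⌊x * 2^i⌋₊ = 0 := Nat.floor_of_nonpos this
    simpa [this] using Nat.pos_pow_of_pos i (by norm_num : 0 < 2)
  · have : x * 2^i < 2^i := by nlinarith
    have h2 : x * 2^i < ((2^i : ℕ) : ℝ) := by push_cast; linarith
    exact Nat.floor_lt (by positivity) |>.mpr h2

lemma eq_floor_of_mem_iv {x : ℝ} {i k : ℕ} (h : x ∈ iv i k) (hx : 0 ≤ x) :
    k = ⌊x * 2^i⌋₊ := by
  obtain ⟨h1, h2⟩ := h
  have hp : (0:ℝ) < (2:ℝ)^i := by positivity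
  have hk : (k:ℝ) ≤ x * 2^i := by
    have := mul_le_mul_of_nonneg_right h1 hp.le
    have hd : dy i * (2:ℝ)^i = 1 := by unfold dy; field_simp
    nlinarith [dy_pos i]
  have hk2 : x * 2^i < (k:ℝ) + 1 := by
    have := mul_lt_mul_of_pos_right h2 hp
    have hd : dy i * (2:ℝ)^i = 1 := by unfold dy; field_simp
    push_cast at this ⊢
    nlinarith [dy_pos i]
  symm
  rw [Nat.floor_eq_iff (by positivity)]
  exact ⟨hk, hk2⟩

lemma floor_div_pow {x : ℝ} (hx : 0 ≤ x) {i K : ℕ} (h : i ≤ K) :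
    ⌊x * 2^i⌋₊ = ⌊x * 2^K⌋₊ / 2^(K-i) := by
  have h1 : ⌊x * 2^K⌋₊ / 2^(K-i) = ⌊x * 2^K / (2^(K-i) : ℕ)⌋₊ := by
    rw [Nat.floor_div_natCast]
  rw [h1]
  congr 1
  have h2 : (2:ℝ)^K = (2:ℝ)^i * (2:ℝ)^(K-i) := by
    rw [← pow_add, Nat.add_sub_cancel' h]
  have hne : ((2^(K-i) : ℕ) : ℝ) = (2:ℝ)^(K-i) := by push_cast; ring
  rw [hne, h2]
  have hpos : (0:ℝ) < (2:ℝ)^(K-i) := by positivity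
  field_simp


/-- the open unit square -/
def USq : Set (ℝ × ℝ) := Ioo (0:ℝ) 1 ×ˢ Ioo (0:ℝ) 1

lemma ivS_subset (i k : ℕ) : ivS i k ⊆ Ioo 0 1 := inter_subset_right

lemma measurableSet_ivS (i k : ℕ) : MeasurableSet (ivS i k) :=
  measurableSet_Ico.inter measurableSet_Ioo

lemma ivS_ordConnected (i k : ℕ) : (ivS i k).OrdConnected :=
  Set.OrdConnected.inter Set.ordConnected_Ico Set.ordConnected_Ioo

lemma Ioo_subset_ivS {i k : ℕ} (hk : k < 2^i) :
    Ioo ((k:ℝ) * dy i) ((k+1 : ℕ) * dy i) ⊆ ivS i k := by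
  intro x hx
  obtain ⟨h1, h2⟩ := hx
  have hk0 : (0:ℝ) ≤ (k:ℝ) * dy i := mul_nonneg (Nat.cast_nonneg k) (dy_pos i).le
  have hk1 : ((k+1 : ℕ):ℝ) * dy i ≤ 1 := by
    have : ((k+1 : ℕ):ℝ) ≤ (2:ℝ)^i := by exact_mod_cast Nat.succ_le_of_lt hk
    have hd : dy i * (2:ℝ)^i = 1 := by unfold dy; field_simp
    nlinarith [dy_pos i]
  exact ⟨⟨h1.le, h2⟩, lt_of_le_of_lt hk0 h1, lt_of_lt_of_le h2 hk1⟩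

lemma volume_ivS {i k : ℕ} (hk : k < 2^i) : volume (ivS i k) = ENNReal.ofReal (dy i) := by
  have hsub1 := Ioo_subset_ivS hk
  have hsub2 : ivS i k ⊆ Ico ((k:ℝ) * dy i) ((k+1 : ℕ) * dy i) := inter_subset_left
  have hlen : ((k+1 : ℕ):ℝ) * dy i - (k:ℝ) * dy i = dy i := by push_cast; ring
  apply le_antisymm
  · have h := measure_mono (μ := volume) hsub2
    rwa [Real.volume_Ico, hlen] at h
  · have h := measure_mono (μ := volume) hsub1
    rwa [Real.volume_Ioo, hlen] at h

lemma mem_ivS_floor {x : ℝ} (hx : x ∈ Ioo (0:ℝ) 1) (i : ℕ) : x ∈ ivS i ⌊x * 2^i⌋₊ :=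
  ⟨mem_iv_floor hx.1.le i, hx⟩

/-- cell of the 2D grid -/
def cell (i j k l : ℕ) : Set (ℝ × ℝ) := ivS i k ×ˢ ivS j l

lemma cell_subset (i j k l : ℕ) : cell i j k l ⊆ USq := fun p hp =>
  ⟨ivS_subset i k hp.1, ivS_subset j l hp.2⟩

lemma measurableSet_cell (i j k l : ℕ) : MeasurableSet (cell i j k l) :=
  (measurableSet_ivS i k).prod (measurableSet_ivS j l)

lemma volume_cell {i j k l : ℕ} (hk : k < 2^i) (hl : l < 2^j) :
    volume (cell i j k l) = ENNReal.ofReal (dy i) * ENNReal.ofReal (dy j) := by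
  unfold cell
  rw [show (volume : Measure (ℝ × ℝ)) = (volume : Measure ℝ).prod volume from rfl]
  rw [Measure.prod_prod, volume_ivS hk, volume_ivS hl]

/-- the grid partition at aspect `(i,j)` -/
def grid (i j : ℕ) : Finset (Set (ℝ × ℝ)) :=
  ((Finset.range (2^i)) ×ˢ (Finset.range (2^j))).image (fun kl => cell i j kl.1 kl.2)

lemma mem_grid_self {u : ℝ × ℝ} (hu : u ∈ USq) (i j : ℕ) :
    cell i j ⌊u.1 * 2^i⌋₊ ⌊u.2 * 2^j⌋₊ ∈ grid i j := by
  unfold grid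
  apply Finset.mem_image.mpr
  refine ⟨(⌊u.1 * 2^i⌋₊, ⌊u.2 * 2^j⌋₊), ?_, rfl⟩
  simp only [Finset.mem_product, Finset.mem_range]
  exact ⟨floor_lt_of_lt_one hu.1.2 i, floor_lt_of_lt_one hu.2.2 j⟩

lemma mem_cell_self {u : ℝ × ℝ} (hu : u ∈ USq) (i j : ℕ) :
    u ∈ cell i j ⌊u.1 * 2^i⌋₊ ⌊u.2 * 2^j⌋₊ :=
  ⟨mem_ivS_floor hu.1 i, mem_ivS_floor hu.2 j⟩

lemma mem_grid_elim {i j : ℕ} {B : Set (ℝ × ℝ)} (hB : B ∈ grid i j) :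
    ∃ k l : ℕ, k < 2^i ∧ l < 2^j ∧ B = cell i j k l := by
  unfold grid at hB
  obtain ⟨⟨k, l⟩, hkl, h⟩ := Finset.mem_image.mp hB
  simp only [Finset.mem_product, Finset.mem_range] at hkl
  exact ⟨k, l, hkl.1, hkl.2, h.symm⟩

lemma grid_isPartition (i j : ℕ) : IsRectPartition (grid i j) := by
  refine ⟨?_, ?_, ?_⟩
  · intro B hB
    obtain ⟨k, l, hk1, hl1, rfl⟩ := mem_grid_elim hB
    have hkl : k < 2^i ∧ l < 2^j := ⟨hk1, hl1⟩
    refine ⟨⟨ivS i k, ivS j l, ivS_ordConnected i k, ivS_ordConnected j l, rfl⟩,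
      measurableSet_cell i j k l, ?_⟩
    rw [volume_cell hkl.1 hkl.2]
    exact ENNReal.mul_pos (by simp [ENNReal.ofReal_pos, dy_pos]) (by simp [ENNReal.ofReal_pos, dy_pos])
  · apply Set.ext
    intro u
    constructor
    · intro hu
      simp only [mem_iUnion] at hu
      obtain ⟨B, hB, huB⟩ := hu
      obtain ⟨k, l, _, _, rfl⟩ := mem_grid_elim hB
      exact cell_subset i j k l huB
    · intro hu
      simp only [mem_iUnion]
      exact ⟨_, mem_grid_self hu i j, mem_cell_self hu i j⟩
  · intro B₁ hB₁ B₂ hB₂ hne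
    obtain ⟨k, l, _, _, rfl⟩ := mem_grid_elim (Finset.mem_coe.mp hB₁)
    obtain ⟨k', l', _, _, rfl⟩ := mem_grid_elim (Finset.mem_coe.mp hB₂)
    simp only [Function.onFun, id_eq]
    rw [Set.disjoint_left]
    rintro ⟨x, y⟩ ⟨hx1, hy1⟩ ⟨hx2, hy2⟩
    apply hne
    have hx0 : (0:ℝ) ≤ x := (ivS_subset i k hx1).1.le
    have hy0 : (0:ℝ) ≤ y := (ivS_subset j l hy1).1.le
    have hk : k = k' := by
      rw [eq_floor_of_mem_iv hx1.1 hx0, eq_floor_of_mem_iv hx2.1 hx0]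
    have hl : l = l' := by
      rw [eq_floor_of_mem_iv hy1.1 hy0, eq_floor_of_mem_iv hy2.1 hy0]
    rw [hk, hl]

lemma grid_diam_le {i j : ℕ} {B : Set (ℝ × ℝ)} (hB : B ∈ grid i j) {m : ℕ}
    (him : m ≤ i) (hjm : m ≤ j) : Metric.diam B ≤ dy m := by
  obtain ⟨k, l, _, _, rfl⟩ := mem_grid_elim hB
  apply Metric.diam_le_of_forall_dist_le (dy_pos m).le
  rintro ⟨x, y⟩ ⟨hx, hy⟩ ⟨x', y'⟩ ⟨hx', hy'⟩
  rw [Prod.dist_eq]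
  apply max_le
  · rw [Real.dist_eq, abs_sub_le_iff]
    have h1 := hx.1.1; have h2 := hx.1.2; have h3 := hx'.1.1; have h4 := hx'.1.2
    have : ((k+1:ℕ):ℝ) * dy i - (k:ℝ) * dy i = dy i := by push_cast; ring
    have hd : dy i ≤ dy m := dy_anti him
    constructor <;> nlinarith
  · rw [Real.dist_eq, abs_sub_le_iff]
    have h1 := hy.1.1; have h2 := hy.1.2; have h3 := hy'.1.1; have h4 := hy'.1.2
    have : ((l+1:ℕ):ℝ) * dy j - (l:ℝ) * dy j = dy j := by push_cast; ring
    have hd : dy j ≤ dy m := dy_anti hjm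
    constructor <;> nlinarith

/-! ### Combinatorial core -/

open scoped Classical

lemma div_pow_succ (x e : ℕ) : x / 2^(e+1) = x / 2^e / 2 := by
  rw [pow_succ, Nat.div_div_eq_div_mul]

lemma div_pow_add (x a b : ℕ) : x / 2^a / 2^b = x / 2^(a+b) := by
  rw [Nat.div_div_eq_div_mul, pow_add]

/-- numbers whose quotient by `2^e` equals `c` -/
def blockL (e c : ℕ) : Finset ℕ := Finset.Ico (c * 2^e) (c * 2^e + 2^e)

lemma mem_blockL {e c x : ℕ} : x ∈ blockL e c ↔ x / 2^e = c := by
  have he : 0 < 2^e := Nat.pow_pos (by norm_num)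
  unfold blockL
  rw [Finset.mem_Ico]
  constructor
  · rintro ⟨h1, h2⟩
    exact Nat.div_eq_of_lt_le h1 (by calc x < c * 2^e + 2^e := h2
      _ = (c+1) * 2^e := by ring)
  · intro h
    constructor
    · rw [← h]; exact Nat.div_mul_le_self x _
    · rw [← h]
      calc x = 2^e * (x / 2^e) + x % 2^e := (Nat.div_add_mod x _).symm
        _ < 2^e * (x / 2^e) + 2^e := Nat.add_lt_add_left (Nat.mod_lt x he) _
        _ = x / 2^e * 2^e + 2^e := by ring

lemma card_blockL (e c : ℕ) : (blockL e c).card = 2^e := by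
  unfold blockL; rw [Nat.card_Ico, Nat.add_sub_cancel_left]

/-- same dyadic rectangle of shape `(i, K+L-i)` -/
def sameR (K L i : ℕ) (α β : ℕ × ℕ) : Prop :=
  α.1 / 2^(K-i) = β.1 / 2^(K-i) ∧ α.2 / 2^(i-L) = β.2 / 2^(i-L)

/-- the cross relation: some admissible dyadic rectangle contains both atoms -/
def crossRel (K L : ℕ) (α β : ℕ × ℕ) : Prop :=
  ∃ i ∈ Finset.Icc L K, sameR K L i α β

lemma crossRel_symm {K L : ℕ} {α β : ℕ × ℕ} (h : crossRel K L α β) : crossRel K L β α := by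
  obtain ⟨i, hi, h1, h2⟩ := h
  exact ⟨i, hi, h1.symm, h2.symm⟩

def Atoms (K : ℕ) : Finset (ℕ × ℕ) := (Finset.range (2^K)) ×ˢ (Finset.range (2^K))

lemma mem_Atoms {K : ℕ} {β : ℕ × ℕ} : β ∈ Atoms K ↔ β.1 < 2^K ∧ β.2 < 2^K := by
  unfold Atoms
  rw [Finset.mem_product, Finset.mem_range, Finset.mem_range]

lemma card_Atoms (K : ℕ) : (Atoms K).card = 4^K := by
  unfold Atoms
  rw [Finset.card_product, Finset.card_range, ← Nat.mul_pow]

def kap (K L : ℕ) : ℕ := (K - L) * 2^(K - L - 1)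

/-- the `i`-th disjoint chunk of the cross of `β`: flip the `(i+1)`-st `x`-bit. -/
def Fi (K L i : ℕ) (β : ℕ × ℕ) : Finset (ℕ × ℕ) :=
  (blockL (K-i-1) (2 * (β.1 / 2^(K-i)) + (1 - (β.1 / 2^(K-i-1)) % 2))) ×ˢ
    (blockL (i-L) (β.2 / 2^(i-L)))

lemma card_Fi {K L i : ℕ} {β : ℕ × ℕ} (hL : L ≤ i) (hi : i < K) :
    (Fi K L i β).card = 2^(K-L-1) := by
  unfold Fi
  rw [Finset.card_product, card_blockL, card_blockL, ← pow_add]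
  congr 1
  omega

lemma Fi_subset {K L i : ℕ} {β : ℕ × ℕ} (hβ : β ∈ Atoms K) (hL : L ≤ i) (hi : i < K) :
    Fi K L i β ⊆ (Atoms K).filter (fun α => crossRel K L β α) := by
  obtain ⟨hβ1, hβ2⟩ := mem_Atoms.mp hβ
  rintro ⟨y₁, y₂⟩ hy
  obtain ⟨hy1, hy2⟩ := Finset.mem_product.mp hy
  rw [mem_blockL] at hy1 hy2
  simp only at hy1 hy2
  have hsplit : β.1 / 2^(K-i) = β.1 / 2^(K-i-1) / 2 := by
    have h := div_pow_succ β.1 (K-i-1)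
    rw [show K-i-1+1 = K-i from by omega] at h
    exact h
  have hb : (β.1 / 2^(K-i-1)) % 2 ≤ 1 := by omega
  -- y₁ < 2^K
  have hc_lt : β.1 / 2^(K-i) < 2^i := by
    apply Nat.div_lt_of_lt_mul
    calc β.1 < 2^K := hβ1
      _ = 2^(K-i) * 2^i := by rw [← pow_add]; congr 1; omega
  have hy1K : y₁ < 2^K := by
    have hup : y₁ < (2 * (β.1 / 2^(K-i)) + (1 - (β.1 / 2^(K-i-1)) % 2) + 1) * 2^(K-i-1) := by
      have := mem_blockL.mpr hy1
      unfold blockL at this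
      rw [Finset.mem_Ico] at this
      calc y₁ < (2 * (β.1 / 2^(K-i)) + (1 - (β.1 / 2^(K-i-1)) % 2)) * 2^(K-i-1) + 2^(K-i-1) :=
          this.2
        _ = _ := by ring
    calc y₁ < (2 * (β.1 / 2^(K-i)) + (1 - (β.1 / 2^(K-i-1)) % 2) + 1) * 2^(K-i-1) := hup
      _ ≤ (2 * (β.1 / 2^(K-i)) + 2) * 2^(K-i-1) := Nat.mul_le_mul_right _ (by omega)
      _ ≤ (2 * 2^i) * 2^(K-i-1) := Nat.mul_le_mul_right _ (by omega)
      _ = 2^K := by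
          rw [show (2:ℕ) * 2^i = 2^(i+1) by rw [pow_succ]; ring, ← pow_add]
          congr 1; omega
  have hy2K : y₂ < 2^K := by
    have hq : β.2 / 2^(i-L) < 2^(K-(i-L)) := by
      apply Nat.div_lt_of_lt_mul
      calc β.2 < 2^K := hβ2
        _ = 2^(i-L) * 2^(K-(i-L)) := by rw [← pow_add]; congr 1; omega
    have hup : y₂ < (β.2 / 2^(i-L) + 1) * 2^(i-L) := by
      have := mem_blockL.mpr hy2
      unfold blockL at this
      rw [Finset.mem_Ico] at this
      calc y₂ < (β.2 / 2^(i-L)) * 2^(i-L) + 2^(i-L) := this.2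
        _ = _ := by ring
    calc y₂ < (β.2 / 2^(i-L) + 1) * 2^(i-L) := hup
      _ ≤ 2^(K-(i-L)) * 2^(i-L) := Nat.mul_le_mul_right _ (by omega)
      _ = 2^K := by rw [← pow_add]; congr 1; omega
  rw [Finset.mem_filter]
  refine ⟨mem_Atoms.mpr ⟨hy1K, hy2K⟩, i, Finset.mem_Icc.mpr ⟨hL, hi.le⟩, ?_, ?_⟩
  · show β.1 / 2^(K-i) = y₁ / 2^(K-i)
    have hy1split : y₁ / 2^(K-i) = y₁ / 2^(K-i-1) / 2 := by
      have h := div_pow_succ y₁ (K-i-1)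
      rw [show K-i-1+1 = K-i from by omega] at h
      exact h
    rw [hsplit, hy1split, hy1]
    omega
  · show β.2 / 2^(i-L) = y₂ / 2^(i-L)
    omega

lemma Fi_disjoint {K L : ℕ} {β : ℕ × ℕ} {i i' : ℕ} (hii' : i < i') (hi' : i' < K) :
    Disjoint (Fi K L i β) (Fi K L i' β) := by
  rw [Finset.disjoint_left]
  rintro ⟨y₁, y₂⟩ hy hy'
  obtain ⟨hy1, _⟩ := Finset.mem_product.mp hy
  obtain ⟨hy1', _⟩ := Finset.mem_product.mp hy'
  rw [mem_blockL] at hy1 hy1'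
  simp only at hy1 hy1'
  -- parity mismatch at level i
  have hne : y₁ / 2^(K-i-1) ≠ β.1 / 2^(K-i-1) := by
    intro heq
    rw [heq] at hy1
    omega
  apply hne
  -- agreement at level i' propagates
  have hagree : y₁ / 2^(K-i') = β.1 / 2^(K-i') := by
    have e1 := div_pow_succ y₁ (K-i'-1)
    have e2 := div_pow_succ β.1 (K-i'-1)
    rw [show K-i'-1+1 = K-i' from by omega] at e1 e2
    rw [e1, e2, hy1']
    omega
  have e3 : y₁ / 2^(K-i') / 2^(i'-i-1) = y₁ / 2^(K-i-1) := by
    rw [div_pow_add, show K-i'+(i'-i-1) = K-i-1 from by omega]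
  have e4 : β.1 / 2^(K-i') / 2^(i'-i-1) = β.1 / 2^(K-i-1) := by
    rw [div_pow_add, show K-i'+(i'-i-1) = K-i-1 from by omega]
  rw [← e3, ← e4, hagree]

lemma kappa_le {K L : ℕ} (hLK : L < K) {β : ℕ × ℕ} (hβ : β ∈ Atoms K) :
    kap K L ≤ ((Atoms K).filter (fun α => crossRel K L β α)).card := by
  have hsub : (Finset.Ico L K).biUnion (fun i => Fi K L i β)
      ⊆ (Atoms K).filter (fun α => crossRel K L β α) := by
    intro x hx
    obtain ⟨i, hi, hxi⟩ := Finset.mem_biUnion.mp hx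
    rw [Finset.mem_Ico] at hi
    exact Fi_subset hβ hi.1 hi.2 hxi
  have hdisj : ∀ i ∈ Finset.Ico L K, ∀ i' ∈ Finset.Ico L K, i ≠ i' →
      Disjoint (Fi K L i β) (Fi K L i' β) := by
    intro i hi i' hi' hne
    rw [Finset.mem_Ico] at hi hi'
    rcases Nat.lt_or_ge i i' with h | h
    · exact Fi_disjoint h hi'.2
    · have h2 : i' < i := by omega
      exact (Fi_disjoint h2 hi.2).symm
  have hcard : ((Finset.Ico L K).biUnion (fun i => Fi K L i β)).card = kap K L := by
    rw [Finset.card_biUnion hdisj]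
    calc ∑ i ∈ Finset.Ico L K, (Fi K L i β).card
        = ∑ _i ∈ Finset.Ico L K, 2^(K-L-1) := Finset.sum_congr rfl (fun i hi => by
          rw [Finset.mem_Ico] at hi
          exact card_Fi hi.1 hi.2)
      _ = kap K L := by rw [Finset.sum_const, Nat.card_Ico, smul_eq_mul]; rfl
  rw [← hcard]
  exact Finset.card_le_card hsub

lemma pigeon {K L : ℕ} (hLK : L < K) {U : Finset (ℕ × ℕ)} (hU : U ⊆ Atoms K)
    (hne : U.Nonempty) :
    ∃ α ∈ Atoms K, U.card * kap K L ≤ (U.filter (fun β => crossRel K L α β)).card * 4^K := by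
  by_contra hcon
  push_neg at hcon
  have hAne : (Atoms K).Nonempty :=
    ⟨(0,0), mem_Atoms.mpr ⟨Nat.pow_pos (by norm_num), Nat.pow_pos (by norm_num)⟩⟩
  have hsum : ∑ α ∈ Atoms K, (U.filter (fun β => crossRel K L α β)).card * 4^K
      < ∑ α ∈ Atoms K, U.card * kap K L :=
    Finset.sum_lt_sum_of_nonempty hAne (fun α hα => hcon α hα)
  have hdc : ∑ α ∈ Atoms K, (U.filter (fun β => crossRel K L α β)).card
      = ∑ β ∈ U, ((Atoms K).filter (fun α => crossRel K L β α)).card := by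
    have e1 : ∀ α, (U.filter (fun β => crossRel K L α β)).card
        = ∑ β ∈ U, if crossRel K L α β then 1 else 0 := fun α => Finset.card_filter _ _
    have e2 : ∀ β, ((Atoms K).filter (fun α => crossRel K L β α)).card
        = ∑ α ∈ Atoms K, if crossRel K L α β then 1 else 0 := by
      intro β
      rw [Finset.card_filter]
      exact Finset.sum_congr rfl (fun α _ => by
        congr 1
        simp only [eq_iff_iff]
        exact ⟨fun h => crossRel_symm h, fun h => crossRel_symm h⟩)
    simp only [e1, e2]
    exact Finset.sum_comm
  have hlow : U.card * kap K L ≤ ∑ α ∈ Atoms K, (U.filter (fun β => crossRel K L α β)).card := by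
    rw [hdc]
    calc U.card * kap K L = ∑ _β ∈ U, kap K L := by rw [Finset.sum_const, smul_eq_mul]
      _ ≤ _ := Finset.sum_le_sum (fun β hβ => kappa_le hLK (hU hβ))
  have h1 : ∑ α ∈ Atoms K, (U.filter (fun β => crossRel K L α β)).card * 4^K
      = (∑ α ∈ Atoms K, (U.filter (fun β => crossRel K L α β)).card) * 4^K :=
    (Finset.sum_mul _ _ _).symm
  have h2 : ∑ _α ∈ Atoms K, U.card * kap K L = U.card * kap K L * 4^K := by
    rw [Finset.sum_const, card_Atoms, smul_eq_mul]
    ring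
  rw [h1, h2] at hsum
  have h3 : U.card * kap K L * 4^K
      ≤ (∑ α ∈ Atoms K, (U.filter (fun β => crossRel K L α β)).card) * 4^K :=
    Nat.mul_le_mul_right _ hlow
  omega

lemma greedy_aux {K L : ℕ} (hLK : L < K) (t : ℕ) :
    ∀ n (U : Finset (ℕ × ℕ)), U ⊆ Atoms K → U.card ≤ n →
    ∃ Sb R : Finset (ℕ × ℕ), Sb ⊆ Atoms K ∧ R ⊆ U ∧ R.card ≤ t ∧
      (∀ β ∈ U, (∃ α ∈ Sb, crossRel K L α β) ∨ β ∈ R) ∧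
      Sb.card * ((t+1) * kap K L) ≤ U.card * 4^K := by
  intro n
  induction n with
  | zero =>
    intro U hU hc
    refine ⟨∅, ∅, Finset.empty_subset _, Finset.empty_subset _, by simp, ?_, by simp⟩
    intro β hβ
    have : U = ∅ := Finset.card_eq_zero.mp (Nat.le_zero.mp hc)
    rw [this] at hβ
    exact absurd hβ (Finset.notMem_empty β)
  | succ n ih =>
    intro U hU hc
    by_cases ht : U.card ≤ t
    · exact ⟨∅, U, Finset.empty_subset _, Finset.Subset.refl U, ht, fun β hβ => Or.inr hβ, by simp⟩
    · push_neg at ht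
      have hne : U.Nonempty := Finset.card_pos.mp (by omega)
      obtain ⟨α, hα, hgood⟩ := pigeon hLK hU hne
      set D := U.filter (fun β => crossRel K L α β) with hD
      have hDsub : D ⊆ U := Finset.filter_subset _ _
      have hkappos : 1 ≤ kap K L := by
        unfold kap
        exact Nat.mul_pos (by omega) (Nat.pow_pos (by norm_num))
      have hDpos : 1 ≤ D.card := by
        by_contra hD0
        push_neg at hD0
        have h0 : D.card = 0 := by omega
        rw [h0, Nat.zero_mul] at hgood
        have hone : 1 ≤ U.card * kap K L :=
          Nat.one_le_iff_ne_zero.mpr (Nat.mul_ne_zero (by omega) (by omega))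
        omega
      set U' := U \ D with hU'
      have hcard' : U'.card = U.card - D.card := Finset.card_sdiff_of_subset hDsub
      have hDle : D.card ≤ U.card := Finset.card_le_card hDsub
      have hcard'' : U'.card ≤ n := by omega
      obtain ⟨Sb', R', hSb', hR', hRt, hcov, hbound⟩ :=
        ih U' (fun x hx => hU (Finset.mem_sdiff.mp hx).1) hcard''
      refine ⟨insert α Sb', R', Finset.insert_subset hα hSb',
        hR'.trans Finset.sdiff_subset, hRt, ?_, ?_⟩
      · intro β hβ
        by_cases hβD : β ∈ D
        · exact Or.inl ⟨α, Finset.mem_insert_self α Sb', (Finset.mem_filter.mp hβD).2⟩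
        · have hβU' : β ∈ U' := Finset.mem_sdiff.mpr ⟨hβ, hβD⟩
          rcases hcov β hβU' with ⟨α', hα', h⟩ | h
          · exact Or.inl ⟨α', Finset.mem_insert_of_mem hα', h⟩
          · exact Or.inr h
      · have hci : (insert α Sb').card ≤ Sb'.card + 1 := Finset.card_insert_le α Sb'
        have key : (t+1) * kap K L ≤ D.card * 4^K :=
          le_trans (Nat.mul_le_mul_right _ (by omega)) hgood
        have hDle : D.card ≤ U.card := Finset.card_le_card hDsub
        have hsum : U'.card + D.card = U.card := by omega
        calc (insert α Sb').card * ((t+1) * kap K L)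
            ≤ (Sb'.card + 1) * ((t+1) * kap K L) := Nat.mul_le_mul_right _ hci
          _ = Sb'.card * ((t+1) * kap K L) + (t+1) * kap K L := by ring
          _ ≤ U'.card * 4^K + D.card * 4^K := Nat.add_le_add hbound key
          _ = (U'.card + D.card) * 4^K := by ring
          _ = U.card * 4^K := by rw [hsum]

lemma greedy {K L : ℕ} (hLK : L < K) (t : ℕ) :
    ∃ Sb R : Finset (ℕ × ℕ), Sb ⊆ Atoms K ∧ R ⊆ Atoms K ∧ R.card ≤ t ∧
      (∀ β ∈ Atoms K, (∃ α ∈ Sb, crossRel K L α β) ∨ β ∈ R) ∧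
      Sb.card * ((t+1) * kap K L) ≤ 4^K * 4^K := by
  obtain ⟨Sb, R, h1, h2, h3, h4, h5⟩ :=
    greedy_aux hLK t (Atoms K).card (Atoms K) (Finset.Subset.refl _) le_rfl
  rw [card_Atoms] at h5
  exact ⟨Sb, R, h1, h2, h3, h4, h5⟩

/-! ### Spike functions -/

/-- closed dyadic atom (product of `Ico`s) -/
def atomC (K : ℕ) (α : ℕ × ℕ) : Set (ℝ × ℝ) := iv K α.1 ×ˢ iv K α.2

/-- open dyadic atom -/
def atomO (K : ℕ) (α : ℕ × ℕ) : Set (ℝ × ℝ) :=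
  Ioo ((α.1:ℝ) * dy K) ((α.1+1 : ℕ) * dy K) ×ˢ Ioo ((α.2:ℝ) * dy K) ((α.2+1 : ℕ) * dy K)

lemma atomO_subset_atomC (K : ℕ) (α : ℕ × ℕ) : atomO K α ⊆ atomC K α := fun p hp =>
  ⟨Ioo_subset_Ico_self hp.1, Ioo_subset_Ico_self hp.2⟩

lemma volume_atomO (K : ℕ) (α : ℕ × ℕ) :
    volume (atomO K α) = ENNReal.ofReal (dy K) * ENNReal.ofReal (dy K) := by
  unfold atomO
  rw [show (volume : Measure (ℝ × ℝ)) = (volume : Measure ℝ).prod volume from rfl]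
  rw [Measure.prod_prod, Real.volume_Ioo, Real.volume_Ioo]
  congr 2 <;> push_cast <;> ring

lemma measurableSet_atomC (K : ℕ) (α : ℕ × ℕ) : MeasurableSet (atomC K α) :=
  (measurableSet_Ico).prod measurableSet_Ico

/-- Ioo component of atom is inside `ivS i k` when indices are compatible -/
lemma Ioo_atom_subset_ivS {K a i k : ℕ} (haK : a < 2^K) (hik : i ≤ K)
    (hk : a / 2^(K-i) = k) :
    Ioo ((a:ℝ) * dy K) ((a+1 : ℕ) * dy K) ⊆ ivS i k := by
  intro x hx
  constructor
  · rw [← hk]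
    exact iv_nested hik (Ioo_subset_Ico_self hx)
  · constructor
    · have h0 : (0:ℝ) ≤ (a:ℝ) * dy K := mul_nonneg (Nat.cast_nonneg a) (dy_pos K).le
      exact lt_of_le_of_lt h0 hx.1
    · have h1 : ((a+1 : ℕ):ℝ) * dy K ≤ 1 := by
        have : ((a+1 : ℕ):ℝ) ≤ (2:ℝ)^K := by exact_mod_cast Nat.succ_le_of_lt haK
        have hd : dy K * (2:ℝ)^K = 1 := by unfold dy; field_simp
        nlinarith [dy_pos K]
      exact lt_of_lt_of_le hx.2 h1

lemma atomO_subset_cell {K i j k l : ℕ} {α : ℕ × ℕ} (hα1 : α.1 < 2^K) (hα2 : α.2 < 2^K)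
    (hik : i ≤ K) (hjk : j ≤ K) (hk : α.1 / 2^(K-i) = k) (hl : α.2 / 2^(K-j) = l) :
    atomO K α ⊆ cell i j k l := fun p hp =>
  ⟨Ioo_atom_subset_ivS hα1 hik hk hp.1, Ioo_atom_subset_ivS hα2 hjk hl hp.2⟩

/-- sum of spikes of a common height `v` on the atoms of `T` -/
def spikeFun (K : ℕ) (T : Finset (ℕ × ℕ)) (v : ℝ≥0∞) : ℝ × ℝ → ℝ≥0∞ :=
  fun p => ∑ α ∈ T, (atomC K α).indicator (fun _ => v) p

lemma spikeFun_measurable (K : ℕ) (T : Finset (ℕ × ℕ)) (v : ℝ≥0∞) :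
    Measurable (spikeFun K T v) := by
  apply Finset.measurable_sum
  intro α _
  exact measurable_const.indicator (measurableSet_atomC K α)

lemma lintegral_spikeFun (K : ℕ) (T : Finset (ℕ × ℕ)) (hT : T ⊆ Atoms K) (v : ℝ≥0∞) :
    ∫⁻ p, spikeFun K T v p
      = T.card * (v * (ENNReal.ofReal (dy K) * ENNReal.ofReal (dy K))) := by
  unfold spikeFun
  rw [lintegral_finset_sum _ (fun α _ => measurable_const.indicator (measurableSet_atomC K α))]
  have he : ∀ α ∈ T, ∫⁻ p, (atomC K α).indicator (fun _ => v) p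
      = v * (ENNReal.ofReal (dy K) * ENNReal.ofReal (dy K)) := by
    intro α hα
    rw [lintegral_indicator_const (measurableSet_atomC K α)]
    congr 1
    obtain ⟨h1, h2⟩ := mem_Atoms.mp (hT hα)
    unfold atomC
    rw [show (volume : Measure (ℝ × ℝ)) = (volume : Measure ℝ).prod volume from rfl]
    rw [Measure.prod_prod]
    unfold iv
    rw [Real.volume_Ico, Real.volume_Ico]
    congr 2 <;> push_cast <;> ring
  rw [Finset.sum_congr rfl he, Finset.sum_const, nsmul_eq_mul]

lemma cell_avg {K i j k l : ℕ} {T : Finset (ℕ × ℕ)} {v : ℝ≥0∞} {α : ℕ × ℕ} (hα : α ∈ T)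
    (hα1 : α.1 < 2^K) (hα2 : α.2 < 2^K) (hik : i ≤ K) (hjk : j ≤ K)
    (hk : α.1 / 2^(K-i) = k) (hl : α.2 / 2^(K-j) = l)
    (φ : ℝ × ℝ → ℝ≥0∞) (hφ : ∀ p, spikeFun K T v p ≤ φ p) :
    v * (ENNReal.ofReal (dy K) * ENNReal.ofReal (dy K)) ≤ ∫⁻ p in cell i j k l, φ p := by
  have hsub : atomO K α ⊆ atomC K α ∩ cell i j k l :=
    subset_inter (atomO_subset_atomC K α) (atomO_subset_cell hα1 hα2 hik hjk hk hl)
  calc v * (ENNReal.ofReal (dy K) * ENNReal.ofReal (dy K))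
      = v * volume (atomO K α) := by rw [volume_atomO]
    _ ≤ v * volume (atomC K α ∩ cell i j k l) :=
        mul_le_mul_right (measure_mono hsub) v
    _ = ∫⁻ p in cell i j k l, (atomC K α).indicator (fun _ => v) p := by
        rw [lintegral_indicator_const (measurableSet_atomC K α),
          Measure.restrict_apply (measurableSet_atomC K α)]
    _ ≤ ∫⁻ p in cell i j k l, spikeFun K T v p := by
        apply lintegral_mono
        intro p
        unfold spikeFun
        exact Finset.single_le_sum (f := fun α' => (atomC K α').indicator (fun _ => v) p)
          (fun _ _ => zero_le) hα
    _ ≤ ∫⁻ p in cell i j k l, φ p := lintegral_mono hφ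

/-! ### The gadget -/

lemma two_pow_mul_self (K : ℕ) : (2:ℝ)^K * (2:ℝ)^K = (4:ℝ)^K := by
  rw [← mul_pow]; norm_num

set_option maxHeartbeats 2000000 in
lemma gadget (C δ : ℝ) (hC : 1 ≤ C) (hδ0 : 0 < δ) (hδ1 : δ ≤ 1) (L : ℕ) :
    ∃ K, L < K ∧ ∃ φ : ℝ × ℝ → ℝ≥0∞, Measurable φ ∧
      (∫⁻ p, φ p) ≤ ENNReal.ofReal δ ∧
      ∀ u ∈ USq, ∃ i j, L ≤ i ∧ i ≤ K ∧ L ≤ j ∧ j ≤ K ∧ (i + j = K + L ∨ (i = K ∧ j = K)) ∧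
        ENNReal.ofReal (2*C) * volume (cell i j ⌊u.1*2^i⌋₊ ⌊u.2*2^j⌋₊)
          ≤ ∫⁻ p in cell i j ⌊u.1*2^i⌋₊ ⌊u.2*2^j⌋₊, φ p := by
  have hC0 : (0:ℝ) < C := lt_of_lt_of_le one_pos hC
  obtain ⟨W, hWdef⟩ : ∃ n : ℕ, n = ⌈(64:ℝ)*C^2/δ^2⌉₊ + 1 := ⟨_, rfl⟩
  obtain ⟨K, hKdef⟩ : ∃ n : ℕ, n = L + W := ⟨_, rfl⟩
  have hW1 : 1 ≤ W := by omega
  have hLK : L < K := by omega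
  have hKL : K - L = W := by omega
  have hWr : (64:ℝ)*C^2/δ^2 + 1 ≤ (W:ℝ) := by
    rw [hWdef]
    push_cast
    have := Nat.le_ceil ((64:ℝ)*C^2/δ^2)
    linarith
  have hWpos : (0:ℝ) < W := by
    have : (0:ℝ) ≤ 64*C^2/δ^2 := by positivity
    linarith
  obtain ⟨P, hPdef⟩ : ∃ x : ℝ, x = (4:ℝ)^K := ⟨_, rfl⟩
  have hPpos : (0:ℝ) < P := by rw [hPdef]; positivity
  obtain ⟨t, htdef⟩ : ∃ n : ℕ, n = ⌈(8:ℝ)*C*P/(δ*W)⌉₊ := ⟨_, rfl⟩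
  have hargpos : (0:ℝ) < 8*C*P/(δ*W) := by positivity
  have htpos : 1 ≤ t := by
    rw [htdef]
    exact Nat.one_le_iff_ne_zero.mpr (by
      intro h
      have := Nat.ceil_eq_zero.mp h
      linarith)
  have htlow : 8*C*P/(δ*(W:ℝ)) ≤ (t:ℝ) := by rw [htdef]; exact Nat.le_ceil _
  have htup : (t:ℝ) ≤ 8*C*P/(δ*(W:ℝ)) + 1 := by
    rw [htdef]
    exact (Nat.ceil_lt_add_one hargpos.le).le
  obtain ⟨Sb, R, hSbA, hRA, hRt, hcov, hSbcard⟩ := greedy hLK t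
  obtain ⟨vbr, hvbr⟩ : ∃ x : ℝ, x = 2*C*2^W := ⟨_, rfl⟩
  have hvbr0 : 0 ≤ vbr := by rw [hvbr]; positivity
  obtain ⟨vb, hvb⟩ : ∃ x : ℝ≥0∞, x = ENNReal.ofReal vbr := ⟨_, rfl⟩
  obtain ⟨vr, hvr⟩ : ∃ x : ℝ≥0∞, x = ENNReal.ofReal (2*C) := ⟨_, rfl⟩
  obtain ⟨φ, hφdef⟩ : ∃ ψ : ℝ × ℝ → ℝ≥0∞,
    ψ = fun p => spikeFun K Sb vb p + spikeFun K R vr p := ⟨_, rfl⟩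
  have hφb : ∀ p, spikeFun K Sb vb p ≤ φ p := fun p => by
    rw [hφdef]; exact le_add_right le_rfl
  have hφr : ∀ p, spikeFun K R vr p ≤ φ p := fun p => by
    rw [hφdef]; exact le_add_left le_rfl
  have hdy2 : dy K * dy K = P⁻¹ := by
    unfold dy
    rw [← mul_inv, two_pow_mul_self, hPdef]
  have hPbig : 64*C^2/δ^2 + 1 ≤ P := by
    have h1 : ((W:ℝ) + 1) ≤ (2:ℝ)^W := by
      have := @Nat.lt_two_pow_self W
      exact_mod_cast Nat.succ_le_of_lt this
    have h2 : (2:ℝ)^W ≤ (4:ℝ)^W := pow_le_pow_left₀ (by norm_num) (by norm_num) W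
    have h3 : (4:ℝ)^W ≤ (4:ℝ)^K := pow_le_pow_right₀ (by norm_num) (by omega)
    rw [hPdef]
    linarith
  have hdP : 8*C ≤ δ * P := by
    have hkey : 64*C^2 + δ^2 ≥ 8*C*δ := by nlinarith [sq_nonneg (8*C - δ)]
    have h2 : δ * (64*C^2/δ^2 + 1) = 64*C^2/δ + δ := by field_simp
    have h3 : 64*C^2/δ + δ ≥ 8*C := by
      rw [ge_iff_le, ← sub_nonneg]
      have he : 64*C^2/δ + δ - 8*C = (64*C^2 + δ^2 - 8*C*δ)/δ := by field_simp
      rw [he]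
      apply div_nonneg _ hδ0.le
      linarith
    calc 8*C ≤ 64*C^2/δ + δ := h3
      _ = δ * (64*C^2/δ^2 + 1) := h2.symm
      _ ≤ δ * P := mul_le_mul_of_nonneg_left hPbig hδ0.le
  have hφmeas : Measurable φ := by
    rw [hφdef]
    exact (spikeFun_measurable _ _ _).add (spikeFun_measurable _ _ _)
  refine ⟨K, hLK, φ, hφmeas, ?_, ?_⟩
  · -- total mass
    have hmass : ∫⁻ p, φ p
        = (Sb.card : ℝ≥0∞) * (vb * (ENNReal.ofReal (dy K) * ENNReal.ofReal (dy K)))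
          + (R.card : ℝ≥0∞) * (vr * (ENNReal.ofReal (dy K) * ENNReal.ofReal (dy K))) := by
      rw [hφdef]
      rw [lintegral_add_left (spikeFun_measurable _ _ _)]
      rw [lintegral_spikeFun K Sb hSbA vb, lintegral_spikeFun K R hRA vr]
    have hconv : ∀ (n : ℕ) (x : ℝ), 0 ≤ x →
        (n : ℝ≥0∞) * (ENNReal.ofReal x * (ENNReal.ofReal (dy K) * ENNReal.ofReal (dy K)))
          = ENNReal.ofReal (n * (x * (dy K * dy K))) := by
      intro n x hx
      rw [← ENNReal.ofReal_mul (dy_pos K).le, ← ENNReal.ofReal_mul hx,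
        ← ENNReal.ofReal_natCast n, ← ENNReal.ofReal_mul (Nat.cast_nonneg n)]
    have hd0 : (0:ℝ) ≤ dy K * dy K := mul_nonneg (dy_pos K).le (dy_pos K).le
    rw [hmass, hvb, hvr, hconv Sb.card vbr hvbr0, hconv R.card (2*C) (by positivity),
      ← ENNReal.ofReal_add (mul_nonneg (Nat.cast_nonneg _) (mul_nonneg hvbr0 hd0))
        (mul_nonneg (Nat.cast_nonneg _) (mul_nonneg (by positivity) hd0))]
    apply ENNReal.ofReal_le_ofReal
    have hbulk : (Sb.card:ℝ) * (vbr * (dy K * dy K)) ≤ δ/2 := by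
      have hnat : Sb.card * ((t+1) * (W * 2^(W-1))) ≤ 4^K * 4^K := by
        rw [show W * 2^(W-1) = kap K L from by unfold kap; rw [hKL]]
        exact hSbcard
      have hcast : (Sb.card:ℝ) * (((t:ℝ)+1) * ((W:ℝ) * 2^(W-1))) ≤ P * P := by
        have h2 : ((Sb.card * ((t+1) * (W * 2^(W-1))) : ℕ) : ℝ)
            ≤ ((4^K * 4^K : ℕ) : ℝ) := by exact_mod_cast hnat
        calc (Sb.card:ℝ) * (((t:ℝ)+1) * ((W:ℝ) * 2^(W-1)))
            = ((Sb.card * ((t+1) * (W * 2^(W-1))) : ℕ) : ℝ) := by push_cast; ring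
          _ ≤ ((4^K * 4^K : ℕ) : ℝ) := h2
          _ = P * P := by rw [hPdef]; push_cast; ring
      have hpow : (2:ℝ)^W = 2^(W-1) * 2 := by
        rw [← pow_succ]
        congr 1
        omega
      have ht1 : (1:ℝ) ≤ (t:ℝ) := by exact_mod_cast htpos
      have hTW : (0:ℝ) < (t:ℝ) * W := by positivity
      have h2 : 8*C*P ≤ (t:ℝ) * (δ*W) := by
        rw [div_le_iff₀ (by positivity)] at htlow
        linarith
      rw [hvbr, hdy2]
      rw [show (Sb.card:ℝ) * (2*C*2^W * P⁻¹) = (Sb.card:ℝ) * (2*C*2^W) / P from by ring,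
        div_le_iff₀ hPpos]
      have e2 : (Sb.card:ℝ) * ((t:ℝ) * ((W:ℝ) * 2^(W-1)))
          ≤ (Sb.card:ℝ) * (((t:ℝ)+1) * ((W:ℝ) * 2^(W-1))) := by
        apply mul_le_mul_of_nonneg_left _ (Nat.cast_nonneg _)
        apply mul_le_mul_of_nonneg_right _ (by positivity)
        linarith
      have e3 : ((Sb.card:ℝ) * ((t:ℝ) * ((W:ℝ) * 2^(W-1)))) * (4*C) ≤ (P*P)*(4*C) :=
        mul_le_mul_of_nonneg_right (le_trans e2 hcast) (by positivity)
      have e4 : (P*P)*(4*C) ≤ δ/2*P*((t:ℝ)*W) := by nlinarith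
      have hmain : (Sb.card:ℝ) * (2*C*2^W) * ((t:ℝ)*W) ≤ δ/2*P * ((t:ℝ)*W) := by
        have e1 : (Sb.card:ℝ) * (2*C*2^W) * ((t:ℝ)*W)
            = ((Sb.card:ℝ) * ((t:ℝ) * ((W:ℝ) * 2^(W-1)))) * (4*C) := by
          rw [hpow]; ring
        rw [e1]
        linarith
      exact le_of_mul_le_mul_right hmain hTW
    have hrep : (R.card:ℝ) * (2*C * (dy K * dy K)) ≤ δ/2 := by
      rw [hdy2]
      have hRr : (R.card:ℝ) ≤ (t:ℝ) := by exact_mod_cast hRt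
      have hsplit : ((8*C*P/(δ*(W:ℝ)))+1) * (2*C*P⁻¹) = 16*C^2/(δ*W) + 2*C/P := by
        field_simp
        ring
      have hW64 : 64*C^2 ≤ δ^2 * W := by
        have h := hWr
        rw [div_add' _ _ _ (by positivity), div_le_iff₀ (by positivity)] at h
        nlinarith
      have hbound1 : 16*C^2/(δ*(W:ℝ)) ≤ δ/4 := by
        rw [div_le_div_iff₀ (by positivity) (by norm_num)]
        nlinarith
      have hbound2 : 2*C/P ≤ δ/4 := by
        rw [div_le_div_iff₀ hPpos (by norm_num)]
        linarith
      calc (R.card:ℝ) * (2*C*P⁻¹) ≤ (t:ℝ) * (2*C*P⁻¹) :=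
            mul_le_mul_of_nonneg_right hRr (by positivity)
        _ ≤ ((8*C*P/(δ*(W:ℝ)))+1) * (2*C*P⁻¹) :=
            mul_le_mul_of_nonneg_right htup (by positivity)
        _ = 16*C^2/(δ*W) + 2*C/P := hsplit
        _ ≤ δ/4 + δ/4 := add_le_add hbound1 hbound2
        _ = δ/2 := by ring
    linarith
  · -- coverage
    intro u hu
    have hβA : (⌊u.1*2^K⌋₊, ⌊u.2*2^K⌋₊) ∈ Atoms K :=
      mem_Atoms.mpr ⟨floor_lt_of_lt_one hu.1.2 K, floor_lt_of_lt_one hu.2.2 K⟩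
    rcases hcov _ hβA with ⟨α, hαSb, hcr⟩ | hβR
    · obtain ⟨i, hiIcc, hs1, hs2⟩ := hcr
      rw [Finset.mem_Icc] at hiIcc
      obtain ⟨hLi, hiK⟩ := hiIcc
      obtain ⟨j, hjdef⟩ : ∃ n : ℕ, n = K + L - i := ⟨_, rfl⟩
      have hjK : j ≤ K := by omega
      have hLj : L ≤ j := by omega
      refine ⟨i, j, hLi, hiK, hLj, hjK, Or.inl (by omega), ?_⟩
      obtain ⟨hα1, hα2⟩ := mem_Atoms.mp (hSbA hαSb)
      have hk : α.1 / 2^(K-i) = ⌊u.1*2^i⌋₊ := by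
        rw [floor_div_pow hu.1.1.le hiK]
        exact hs1
      have hl : α.2 / 2^(K-j) = ⌊u.2*2^j⌋₊ := by
        rw [floor_div_pow hu.2.1.le hjK, show K - j = i - L from by omega]
        exact hs2
      have havg := cell_avg hαSb hα1 hα2 hiK hjK hk hl φ hφb
      have hvol : volume (cell i j ⌊u.1*2^i⌋₊ ⌊u.2*2^j⌋₊)
          = ENNReal.ofReal (dy i) * ENNReal.ofReal (dy j) :=
        volume_cell (floor_lt_of_lt_one hu.1.2 i) (floor_lt_of_lt_one hu.2.2 j)
      have hkey : (2:ℝ)^W * (dy K * dy K) = dy i * dy j := by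
        unfold dy
        have h1 : (0:ℝ) < (2:ℝ)^K := by positivity
        have h2 : (0:ℝ) < (2:ℝ)^i := by positivity
        have h3 : (0:ℝ) < (2:ℝ)^j := by positivity
        field_simp
        rw [← pow_mul, show K * 2 = W + i + j by omega]
        ring
      have hid : vb * (ENNReal.ofReal (dy K) * ENNReal.ofReal (dy K))
          = ENNReal.ofReal (2*C) * (ENNReal.ofReal (dy i) * ENNReal.ofReal (dy j)) := by
        rw [hvb, ← ENNReal.ofReal_mul (dy_pos K).le, ← ENNReal.ofReal_mul hvbr0,
          ← ENNReal.ofReal_mul (dy_pos i).le,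
          ← ENNReal.ofReal_mul (by positivity : (0:ℝ) ≤ 2*C)]
        congr 1
        rw [hvbr, ← hkey]
        ring
      rw [hvol, ← hid]
      exact havg
    · refine ⟨K, K, by omega, le_rfl, by omega, le_rfl, Or.inr ⟨rfl, rfl⟩, ?_⟩
      obtain ⟨hβ1, hβ2⟩ := mem_Atoms.mp hβA
      have hk : (⌊u.1*2^K⌋₊, ⌊u.2*2^K⌋₊).1 / 2^(K-K) = ⌊u.1*2^K⌋₊ := by
        simp [Nat.sub_self]
      have hl : (⌊u.1*2^K⌋₊, ⌊u.2*2^K⌋₊).2 / 2^(K-K) = ⌊u.2*2^K⌋₊ := by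
        simp [Nat.sub_self]
      have havg := cell_avg hβR hβ1 hβ2 le_rfl le_rfl hk hl φ hφr
      have hvol : volume (cell K K ⌊u.1*2^K⌋₊ ⌊u.2*2^K⌋₊)
          = ENNReal.ofReal (dy K) * ENNReal.ofReal (dy K) :=
        volume_cell (floor_lt_of_lt_one hu.1.2 K) (floor_lt_of_lt_one hu.2.2 K)
      rw [hvol]
      rw [hvr] at havg
      exact havg

end SaksAux

set_option maxHeartbeats 2000000 in
/-- Theorem 3.2 of Olshen (2007): there are a nonnegative f ∈ L¹((0,1)²) and
finite rectangle partitions Q⁽ⁿ⁾ with mesh → 0 such that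
limsupₙ E(f|Q⁽ⁿ⁾)(u) = +∞ at every point u of the unit square. -/
theorem stmt9 :
    ∃ (f : ℝ × ℝ → ℝ) (Q : ℕ → Finset (Set (ℝ × ℝ))),
      Measurable f ∧ (∀ x, 0 ≤ f x) ∧ IntegrableOn f (Ioo (0:ℝ) 1 ×ˢ Ioo (0:ℝ) 1) ∧
      (∀ n, IsRectPartition (Q n)) ∧
      (∀ ε > (0:ℝ), ∃ n₀, ∀ n ≥ n₀, ∀ B ∈ Q n, Metric.diam B < ε) ∧
      ∀ u ∈ Ioo (0:ℝ) 1 ×ˢ Ioo (0:ℝ) 1, ∀ C : ℝ, ∀ n₀ : ℕ,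
        ∃ n ≥ n₀, ∃ B ∈ Q n, u ∈ B ∧
          (∫ x in B, f x) / (volume B).toReal > C := by
  classical
  -- the gadget family
  have hgad : ∀ g : ℕ, ∃ K, (g+1) < K ∧ ∃ φ : ℝ × ℝ → ℝ≥0∞, Measurable φ ∧
      (∫⁻ p, φ p) ≤ ENNReal.ofReal ((1/2:ℝ)^g) ∧
      ∀ u ∈ USq, ∃ i j, (g+1) ≤ i ∧ i ≤ K ∧ (g+1) ≤ j ∧ j ≤ K ∧
        (i + j = K + (g+1) ∨ (i = K ∧ j = K)) ∧
        ENNReal.ofReal (2*((g:ℝ)+1)) * volume (cell i j ⌊u.1*2^i⌋₊ ⌊u.2*2^j⌋₊)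
          ≤ ∫⁻ p in cell i j ⌊u.1*2^i⌋₊ ⌊u.2*2^j⌋₊, φ p := by
    intro g
    have h1 : (1:ℝ) ≤ (g:ℝ)+1 := by
      have : (0:ℝ) ≤ (g:ℝ) := Nat.cast_nonneg g
      linarith
    exact gadget ((g:ℝ)+1) ((1/2)^g) h1 (by positivity)
      (pow_le_one₀ (by norm_num) (by norm_num)) (g+1)
  choose Kf hKf φf hφmeas hφmass hφcov using hgad
  -- the function f
  obtain ⟨F, hFdef⟩ : ∃ F : ℝ × ℝ → ℝ≥0∞, F = fun p => ∑' g, φf g p := ⟨_, rfl⟩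
  have hFmeas : Measurable F := by
    rw [hFdef]
    exact Measurable.ennreal_tsum hφmeas
  have hFtot : ∫⁻ p, F p ≤ 2 := by
    rw [hFdef]
    rw [lintegral_tsum (fun g => (hφmeas g).aemeasurable)]
    have hhalf : ENNReal.ofReal (1/2 : ℝ) = 2⁻¹ := by
      rw [show (1/2:ℝ) = (2:ℝ)⁻¹ by norm_num, ENNReal.ofReal_inv_of_pos (by norm_num)]
      norm_num
    calc ∑' g, ∫⁻ p, φf g p ≤ ∑' g : ℕ, ENNReal.ofReal ((1/2:ℝ)^g) :=
        ENNReal.tsum_le_tsum hφmass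
      _ = ∑' g : ℕ, (ENNReal.ofReal (1/2:ℝ))^g :=
        tsum_congr (fun g => ENNReal.ofReal_pow (by norm_num) g)
      _ = (1 - ENNReal.ofReal (1/2:ℝ))⁻¹ := ENNReal.tsum_geometric _
      _ = 2 := by rw [hhalf, ENNReal.one_sub_inv_two, inv_inv]
  have hFne : ∫⁻ p, F p ≠ ⊤ := ne_top_of_le_ne_top (by norm_num) hFtot
  obtain ⟨f, hfdef⟩ : ∃ f : ℝ × ℝ → ℝ, f = fun p => (F p).toReal := ⟨_, rfl⟩
  have hfmeas : Measurable f := by rw [hfdef]; exact hFmeas.ennreal_toReal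
  have hfnn : ∀ x, 0 ≤ f x := by rw [hfdef]; exact fun x => ENNReal.toReal_nonneg
  have hfint : IntegrableOn f (Ioo (0:ℝ) 1 ×ˢ Ioo (0:ℝ) 1) := by
    rw [hfdef]
    apply integrable_toReal_of_lintegral_ne_top hFmeas.aemeasurable.restrict
    apply ne_top_of_le_ne_top hFne
    exact lintegral_mono' Measure.restrict_le_self le_rfl
  -- stage bookkeeping
  obtain ⟨len, hlen⟩ : ∃ fn : ℕ → ℕ, ∀ g, fn g = (Kf g - (g+1)) + 2 := ⟨_, fun _ => rfl⟩
  obtain ⟨start, hstart0, hstartS⟩ :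
      ∃ fn : ℕ → ℕ, fn 0 = 0 ∧ ∀ g, fn (g+1) = fn g + len g :=
    ⟨fun n => ∑ g ∈ Finset.range n, len g, by simp, fun g => Finset.sum_range_succ _ g⟩
  have hlen1 : ∀ g, 1 ≤ len g := fun g => by rw [hlen]; omega
  have hstartmono : Monotone start := monotone_nat_of_le_succ (fun g => by
    rw [hstartS]; omega)
  have hstartge : ∀ g, g ≤ start g := by
    intro g
    induction g with
    | zero => omega
    | succ g ih =>
      have := hlen1 g
      rw [hstartS]
      omega
  have hex : ∀ n, ∃ g, n < start (g+1) :=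
    fun n => ⟨n, lt_of_lt_of_le (Nat.lt_succ_self n) (hstartge (n+1))⟩
  obtain ⟨G, hGspec, hGmin⟩ : ∃ G : ℕ → ℕ, (∀ n, n < start (G n + 1)) ∧
      (∀ n g, n < start (g+1) → G n ≤ g) :=
    ⟨fun n => Nat.find (hex n), fun n => Nat.find_spec (hex n),
      fun n g h => Nat.find_min' (hex n) h⟩
  have hGle : ∀ n, start (G n) ≤ n := by
    intro n
    rcases Nat.eq_zero_or_pos (G n) with h | h
    · rw [h, hstart0]; omega
    · by_contra hcon
      push_neg at hcon
      have h2 : G n ≤ G n - 1 := hGmin n (G n - 1) (by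
        rw [show G n - 1 + 1 = G n from by omega]
        exact hcon)
      omega
  have hGlarge : ∀ m n, start m ≤ n → m ≤ G n := by
    intro m n h
    by_contra hcon
    push_neg at hcon
    have : start (G n + 1) ≤ start m := hstartmono (by omega)
    have := hGspec n
    omega
  have hGeq : ∀ g r, r < len g → G (start g + r) = g := by
    intro g r hr
    have h1 : G (start g + r) ≤ g := hGmin _ g (by rw [hstartS]; omega)
    have h2 : g ≤ G (start g + r) := hGlarge g _ (by omega)
    omega
  -- the aspect of each stage
  obtain ⟨asp, haspdef⟩ : ∃ asp : ℕ → ℕ × ℕ, ∀ n, asp n =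
      if n - start (G n) ≤ Kf (G n) - (G n + 1)
      then (G n + 1 + (n - start (G n)), Kf (G n) - (n - start (G n)))
      else (Kf (G n), Kf (G n)) := ⟨_, fun _ => rfl⟩
  have haspb : ∀ n, G n + 1 ≤ (asp n).1 ∧ (asp n).1 ≤ Kf (G n) ∧
      G n + 1 ≤ (asp n).2 ∧ (asp n).2 ≤ Kf (G n) := by
    intro n
    have hK := hKf (G n)
    rw [haspdef]
    split
    · rename_i h
      refine ⟨by omega, by omega, by omega, by omega⟩
    · exact ⟨by omega, le_rfl, by omega, le_rfl⟩
  obtain ⟨Q, hQdef⟩ : ∃ Q : ℕ → Finset (Set (ℝ × ℝ)),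
      ∀ n, Q n = grid (asp n).1 (asp n).2 := ⟨_, fun _ => rfl⟩
  refine ⟨f, Q, hfmeas, hfnn, hfint, ?_, ?_, ?_⟩
  · intro n
    rw [hQdef]
    exact grid_isPartition _ _
  · -- mesh
    intro ε hε
    obtain ⟨m, hm⟩ : ∃ m : ℕ, (1/2:ℝ)^m < ε := exists_pow_lt_of_lt_one hε (by norm_num)
    refine ⟨start m, ?_⟩
    intro n hn B hB
    rw [hQdef] at hB
    have hmn : m ≤ G n := hGlarge m n hn
    have hb := haspb n
    have hdiam : Metric.diam B ≤ dy (G n + 1) :=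
      grid_diam_le hB hb.1 hb.2.2.1
    calc Metric.diam B ≤ dy (G n + 1) := hdiam
      _ ≤ dy m := dy_anti (by omega)
      _ < ε := by rw [dy_eq]; exact hm
  · -- divergence
    intro u hu C n₀
    obtain ⟨g, hgn₀, hgC⟩ : ∃ g : ℕ, n₀ ≤ g ∧ C ≤ (g:ℝ) := by
      refine ⟨max n₀ ⌈C⌉₊, le_max_left _ _, ?_⟩
      calc C ≤ (⌈C⌉₊ : ℝ) := Nat.le_ceil C
        _ ≤ ((max n₀ ⌈C⌉₊ : ℕ) : ℝ) := by exact_mod_cast le_max_right n₀ ⌈C⌉₊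
    obtain ⟨i, j, hi1, hi2, hj1, hj2, hij, havg⟩ := hφcov g u hu
    -- the stage index within block g
    obtain ⟨r, hrlen, hasp⟩ : ∃ r, r < len g ∧ asp (start g + r) = (i, j) := by
      have hGr : ∀ r, r < len g → G (start g + r) = g := hGeq g
      rcases hij with h | h
      · refine ⟨i - (g+1), by rw [hlen]; omega, ?_⟩
        rw [haspdef, hGr _ (by rw [hlen]; omega)]
        rw [show start g + (i - (g+1)) - start g = i - (g+1) from by omega]
        rw [if_pos (by omega)]
        have : g + 1 + (i - (g+1)) = i := by omega
        have h2 : Kf g - (i - (g+1)) = j := by omega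
        rw [this, h2]
      · refine ⟨Kf g - (g+1) + 1, by rw [hlen]; omega, ?_⟩
        rw [haspdef, hGr _ (by rw [hlen]; omega)]
        rw [show start g + (Kf g - (g+1) + 1) - start g = Kf g - (g+1) + 1 from by omega]
        rw [if_neg (by omega)]
        rw [h.1, h.2]
    refine ⟨start g + r, le_trans hgn₀ (le_trans (hstartge g) (by omega)), ?_⟩
    have hQn : Q (start g + r) = grid i j := by
      rw [hQdef, hasp]
    refine ⟨cell i j ⌊u.1*2^i⌋₊ ⌊u.2*2^j⌋₊, by rw [hQn]; exact mem_grid_self hu i j,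
      mem_cell_self hu i j, ?_⟩
    -- the average estimate
    obtain ⟨B, hBdef⟩ : ∃ B : Set (ℝ × ℝ), B = cell i j ⌊u.1*2^i⌋₊ ⌊u.2*2^j⌋₊ := ⟨_, rfl⟩
    rw [← hBdef]
    have hvolB : volume B = ENNReal.ofReal (dy i * dy j) := by
      rw [hBdef, volume_cell (floor_lt_of_lt_one hu.1.2 i) (floor_lt_of_lt_one hu.2.2 j),
        ENNReal.ofReal_mul (dy_pos i).le]
    have hVpos : 0 < (volume B).toReal := by
      rw [hvolB, ENNReal.toReal_ofReal (mul_nonneg (dy_pos i).le (dy_pos j).le)]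
      exact mul_pos (dy_pos i) (dy_pos j)
    have hBFfin : ∫⁻ p in B, F p ≠ ⊤ :=
      ne_top_of_le_ne_top hFne (lintegral_mono' Measure.restrict_le_self le_rfl)
    have hlow : ENNReal.ofReal (2*((g:ℝ)+1)) * volume B ≤ ∫⁻ p in B, F p := by
      rw [hBdef]
      refine le_trans havg (lintegral_mono (fun p => ?_))
      rw [hFdef]
      exact ENNReal.le_tsum g
    have hInt : ∫ x in B, f x = (∫⁻ p in B, F p).toReal := by
      rw [hfdef]
      apply integral_toReal hFmeas.aemeasurable.restrict
      exact ae_lt_top hFmeas hBFfin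
    have hIlow : 2*((g:ℝ)+1) * (volume B).toReal ≤ ∫ x in B, f x := by
      rw [hInt]
      have h1 := ENNReal.toReal_mono hBFfin hlow
      rw [ENNReal.toReal_mul, ENNReal.toReal_ofReal (by positivity)] at h1
      exact h1
    have hdiv : 2*((g:ℝ)+1) ≤ (∫ x in B, f x) / (volume B).toReal :=
      (le_div_iff₀ hVpos).mpr hIlow
    have hC : C < 2*((g:ℝ)+1) := by
      have : (0:ℝ) ≤ (g:ℝ) := Nat.cast_nonneg g
      linarith
    exact lt_of_lt_of_le hC hdiv
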